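/- arXiv:1512.02615 — 6 statements merged into one kernel-verified Lean document; each statement's English description precedes it below -/
import Mathlib

section
/- For positive definite d×d matrices ρ (with tr ρ = 1) and σ, the two variational quantities sup_{ω > 0} (tr[ρ log ω] − log tr[σ ω]) and sup_{ω > 0} (tr[ρ log ω] + 1 − tr[σ ω]) are equal, where the suprema run over positive definite matrices ω. -/
open Matrix
open scoped ComplexOrder

noncomputable def mlog {d : ℕ} (A : Matrix (Fin d) (Fin d) ℂ) : Matrix (Fin d) (Fin d) ℂ :=
  cfc (R := ℝ) Real.log A

noncomputable def mpow {d : ℕ} (A : Matrix (Fin d) (Fin d) ℂ) (p : ℝ) : Matrix (Fin d) (Fin d) ℂ :=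
  cfc (R := ℝ) (fun t : ℝ => t ^ p) A

noncomputable def mexp {d : ℕ} (A : Matrix (Fin d) (Fin d) ℂ) : Matrix (Fin d) (Fin d) ℂ :=
  NormedSpace.exp A

/-- Kullback-Leibler divergence with the convention that terms with `P x = 0` contribute `0`. -/
noncomputable def KL {X : Type*} [Fintype X] (P Q : X → ℝ) : ℝ :=
  ∑ x, if P x = 0 then 0 else P x * Real.log (P x / Q x)

/-- A rank-one projective measurement: mutually orthogonal rank-1 projectors summing to 1. -/
def IsRankOneProjMeas {d : ℕ} (P : Fin d → Matrix (Fin d) (Fin d) ℂ) : Prop :=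
  (∀ i, (P i).IsHermitian) ∧ (∀ i j, P i * P j = if i = j then P i else 0) ∧
    (∑ i, P i = 1) ∧ (∀ i, (P i).rank = 1)

/-! Since `tr ρ = 1` and `log (c • ω) = log c + log ω`, replacing `ω` by `ω / tr[σ ω]` turns the
first objective at `ω` into the second one at the rescaled matrix. Conversely `log t ≤ t - 1`
bounds the second objective by the first at the same `ω`. So each supremum dominates the other. -/

theorem ciSup_eq_ciSup_of_forall_exists_le {α ι ι' : Type*} [ConditionallyCompleteLinearOrder α]
    {f : ι → α} {g : ι' → α} (hf : ∀ i, ∃ j, f i ≤ g j) (hg : ∀ j, ∃ i, g j ≤ f i) :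
    ⨆ i, f i = ⨆ j, g j :=
  csSup_eq_csSup_of_forall_exists_le
    (by rintro _ ⟨i, rfl⟩; obtain ⟨j, h⟩ := hf i; exact ⟨_, ⟨j, rfl⟩, h⟩)
    (by rintro _ ⟨j, rfl⟩; obtain ⟨i, h⟩ := hg j; exact ⟨_, ⟨i, rfl⟩, h⟩)

namespace Matrix

theorem nonempty_of_trace_ne_zero {n R : Type*} [Fintype n] [AddCommMonoid R] {A : Matrix n n R}
    (hA : A.trace ≠ 0) : Nonempty n := by
  by_contra hn
  have := not_nonempty_iff.mp hn
  exact hA (by simp [trace])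

open scoped MatrixOrder in
theorem PosDef.trace_mul_pos {𝕜 n : Type*} [RCLike 𝕜] [Fintype n] [DecidableEq n] [Nonempty n]
    {A B : Matrix n n 𝕜} (hA : A.PosDef) (hB : B.PosDef) : 0 < (A * B).trace := by
  obtain ⟨S, hS, rfl⟩ := CStarAlgebra.isStrictlyPositive_iff_eq_star_mul_self.mp
    hB.isStrictlyPositive
  rw [← mul_assoc, trace_mul_comm, ← mul_assoc]
  exact (hS.posDef_star_right_conjugate_iff.mpr hA).trace_pos

end Matrix

open scoped MatrixOrder in
theorem mlog_smul {d : ℕ} {ω : Matrix (Fin d) (Fin d) ℂ} (hω : ω.PosDef) {c : ℝ} (hc : 0 < c) :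
    mlog (c • ω) = Real.log c • 1 + mlog ω := by
  have hspec (x : ℝ) (hx : x ∈ spectrum ℝ ω) : x ≠ 0 :=
    (hω.isStrictlyPositive.spectrum_pos hx).ne'
  have hsa : IsSelfAdjoint ω := hω.isHermitian
  calc mlog (c • ω) = cfc (fun x ↦ Real.log c + Real.log x) ω := by
        rw [mlog, ← cfc_smul_id (R := ℝ) c ω, ← cfc_comp Real.log (c • ·) ω]
        exact cfc_congr fun x hx ↦ Real.log_mul hc.ne' (hspec x hx)
    _ = Real.log c • 1 + mlog ω := by
        rw [cfc_const_add _ _ _, Algebra.algebraMap_eq_smul_one, mlog]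

theorem trace_mul_mlog_smul {d : ℕ} (ρ : Matrix (Fin d) (Fin d) ℂ) {ω : Matrix (Fin d) (Fin d) ℂ}
    (hω : ω.PosDef) {c : ℝ} (hc : 0 < c) :
    (ρ * mlog (c • ω)).trace = Real.log c * ρ.trace + (ρ * mlog ω).trace := by
  rw [mlog_smul hω hc, mul_add, Matrix.mul_smul, mul_one, trace_add, trace_smul, Complex.real_smul]

theorem measured_relEntropy_variational_eq_general {d : ℕ}
    (ρ σ : Matrix (Fin d) (Fin d) ℂ) (hσ : σ.PosDef)
    (hρ1 : ρ.trace = 1) :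
    (⨆ ω : {ω : Matrix (Fin d) (Fin d) ℂ // ω.PosDef},
        ((ρ * mlog ω.1).trace.re - Real.log ((σ * ω.1).trace.re)))
      = ⨆ ω : {ω : Matrix (Fin d) (Fin d) ℂ // ω.PosDef},
        ((ρ * mlog ω.1).trace.re + 1 - (σ * ω.1).trace.re) := by
  have : Nonempty (Fin d) := nonempty_of_trace_ne_zero (A := ρ) (by simp [hρ1])
  have htr (ω : {ω : Matrix (Fin d) (Fin d) ℂ // ω.PosDef}) : 0 < (σ * ω.1).trace.re :=
    (Complex.pos_iff.mp (hσ.trace_mul_pos ω.2)).1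
  apply ciSup_eq_ciSup_of_forall_exists_le
  · intro ω
    set t := (σ * ω.1).trace.re
    have ht : 0 < t⁻¹ := inv_pos.2 (htr ω)
    refine ⟨⟨t⁻¹ • ω.1, ω.2.smul ht⟩, le_of_eq ?_⟩
    have hσω : (σ * (t⁻¹ • ω.1)).trace.re = 1 := by
      rw [Matrix.mul_smul, trace_smul, Complex.real_smul, Complex.re_ofReal_mul,
        inv_mul_cancel₀ (htr ω).ne']
    rw [trace_mul_mlog_smul ρ ω.2 ht, hρ1, hσω, mul_one, Complex.add_re, Complex.ofReal_re,
      Real.log_inv]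
    ring
  · intro ω
    exact ⟨ω, by linarith [Real.log_le_sub_one_of_pos (htr ω)]⟩

/-- The two variational quantities for the measured relative entropy agree. -/
theorem measured_relEntropy_variational_eq {d : ℕ}
    (ρ σ : Matrix (Fin d) (Fin d) ℂ) (hρ : ρ.PosDef) (hσ : σ.PosDef)
    (hρ1 : ρ.trace = 1) :
    (⨆ ω : {ω : Matrix (Fin d) (Fin d) ℂ // ω.PosDef},
        ((ρ * mlog ω.1).trace.re - Real.log ((σ * ω.1).trace.re)))
      = ⨆ ω : {ω : Matrix (Fin d) (Fin d) ℂ // ω.PosDef},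
        ((ρ * mlog ω.1).trace.re + 1 - (σ * ω.1).trace.re) :=
  measured_relEntropy_variational_eq_general ρ σ hσ hρ1
end

section
/- For a density matrix ρ > 0 and positive definite σ, the projectively measured relative entropy sup over orthogonal rank-1 projective measurements {P_i} of Σ_i tr[P_i ρ] log(tr[P_i ρ]/tr[P_i σ]) equals sup_{ω > 0} tr[ρ log ω] + 1 − tr[σ ω], and the supremum over ω is attained. -/
open Matrix
open scoped ComplexOrder

/-!
Fix a rank-one measurement `P` with outcome distributions `p i = tr (P i ρ)` and
`q i = tr (P i σ)`. Functions of `ω = ∑ i, w i • P i` are computed eigenvalue-wise, so the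
objective `tr (ρ log ω) + 1 - tr (σ ω)` at such `ω` is the classical
`∑ p i log (w i) + 1 - ∑ w i q i`. With `w = p / q` it is the measured relative entropy
`∑ p i log (p i / q i)`, because `∑ p i = tr ρ = 1`. For arbitrary `w > 0` (that is, for any
`ω > 0`, measured in its own eigenbasis) it is at most that, by `log x ≤ x - 1`. So the two
suprema agree. Rank-one measurements form a compact set on which the measured relative entropy
is continuous, so it is maximised at some `P₀`, and the `ω` built from `P₀` attains the
supremum over `ω`.
-/

namespace Real

theorem mul_log_add_sub_le_mul_log_div {p q w : ℝ} (hp : 0 < p) (hq : 0 < q) (hw : 0 < w) :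
    p * log w + p - w * q ≤ p * log (p / q) := by
  have key : log (w * q / p) ≤ w * q / p - 1 := log_le_sub_one_of_pos (by positivity)
  have hsplit : log (w * q / p) = log w - log (p / q) := by
    rw [log_div (by positivity) hp.ne', log_mul hw.ne' hq.ne', log_div hp.ne' hq.ne']
    ring
  have hscaled := mul_le_mul_of_nonneg_left key hp.le
  rw [hsplit, mul_sub_one, mul_div_cancel₀ _ hp.ne'] at hscaled
  linarith

theorem sum_mul_log_add_one_sub_le {ι : Type*} [Fintype ι] {p q w : ι → ℝ}
    (hp : ∀ i, 0 < p i) (hq : ∀ i, 0 < q i) (hw : ∀ i, 0 < w i) (hp1 : ∑ i, p i = 1) :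
    ∑ i, p i * log (w i) + 1 - ∑ i, w i * q i ≤ ∑ i, p i * log (p i / q i) :=
  calc ∑ i, p i * log (w i) + 1 - ∑ i, w i * q i
      = ∑ i, (p i * log (w i) + p i - w i * q i) := by
        rw [Finset.sum_sub_distrib, Finset.sum_add_distrib, hp1]
    _ ≤ ∑ i, p i * log (p i / q i) :=
        Finset.sum_le_sum fun i _ => mul_log_add_sub_le_mul_log_div (hp i) (hq i) (hw i)

end Real

section ResolutionOfIdentity

variable {R ι : Type*} [Fintype ι] [DecidableEq ι]

structure IsResolutionOfIdentity [Semiring R] [Star R] (P : ι → R) : Prop where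
  isSelfAdjoint : ∀ i, IsSelfAdjoint (P i)
  mul_eq : ∀ i j, P i * P j = if i = j then P i else 0
  sum_eq_one : ∑ i, P i = 1

namespace IsResolutionOfIdentity

section Semiring

variable [Semiring R] [StarRing R] {P : ι → R}

theorem isStarProjection (hP : IsResolutionOfIdentity P) (i : ι) : IsStarProjection (P i) :=
  ⟨by simpa [IsIdempotentElem] using hP.mul_eq i i, hP.isSelfAdjoint i⟩

theorem map {S F : Type*} [Semiring S] [StarRing S] [FunLike F R S] [RingHomClass F R S]
    [StarHomClass F R S] (hP : IsResolutionOfIdentity P) (φ : F) :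
    IsResolutionOfIdentity (fun i => φ (P i)) where
  isSelfAdjoint i := (hP.isSelfAdjoint i).map φ
  mul_eq i j := by rw [← map_mul, hP.mul_eq]; split_ifs <;> simp
  sum_eq_one := by rw [← map_sum, hP.sum_eq_one, map_one]

end Semiring

variable [Ring R] [StarRing R] [Algebra ℝ R] {P : ι → R}

theorem sum_smul_mul (hP : IsResolutionOfIdentity P) (c : ι → ℝ) (i : ι) :
    (∑ j, c j • P j) * P i = c i • P i := by
  simp [Finset.sum_mul, hP.mul_eq]

theorem sum_smul_mul_sum_smul (hP : IsResolutionOfIdentity P) (a b : ι → ℝ) :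
    (∑ i, a i • P i) * ∑ i, b i • P i = ∑ i, (a i * b i) • P i := by
  simp only [Finset.mul_sum, mul_smul_comm, hP.sum_smul_mul, smul_smul, mul_comm (b _)]

theorem isUnit_sum_smul (hP : IsResolutionOfIdentity P) {c : ι → ℝ} (hc : ∀ i, c i ≠ 0) :
    IsUnit (∑ i, c i • P i) := by
  refine ⟨⟨∑ i, c i • P i, ∑ i, (c i)⁻¹ • P i, ?_, ?_⟩, rfl⟩ <;>
    simp only [hP.sum_smul_mul_sum_smul, mul_inv_cancel₀ (hc _), inv_mul_cancel₀ (hc _), one_smul,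
      hP.sum_eq_one]

theorem isSelfAdjoint_sum_smul [StarModule ℝ R] (hP : IsResolutionOfIdentity P) (c : ι → ℝ) :
    IsSelfAdjoint (∑ i, c i • P i) :=
  isSelfAdjoint_sum _ fun i _ => (IsSelfAdjoint.all (c i)).smul (hP.isSelfAdjoint i)

theorem mem_spectrum_sum_smul (hP : IsResolutionOfIdentity P) (c : ι → ℝ) {i : ι}
    (hi : P i ≠ 0) : c i ∈ spectrum ℝ (∑ j, c j • P j) := by
  rw [spectrum.mem_iff]
  rintro ⟨u, hu⟩
  have hkill : (algebraMap ℝ R (c i) - ∑ j, c j • P j) * P i = 0 := by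
    rw [sub_mul, hP.sum_smul_mul, Algebra.algebraMap_eq_smul_one, smul_mul_assoc, one_mul,
      sub_self]
  apply hi
  simpa [← hu] using congrArg ((↑u⁻¹ : R) * ·) hkill

/-- Evaluation at the eigenvalues `c i`; by uniqueness of the continuous functional calculus it
is the functional calculus of `∑ i, c i • P i`. -/
noncomputable def evalStarAlgHom [StarModule ℝ R] (hP : IsResolutionOfIdentity P) (c : ι → ℝ)
    (hne : ∀ i, P i ≠ 0) : C(spectrum ℝ (∑ i, c i • P i), ℝ) →⋆ₐ[ℝ] R where
  toFun g := ∑ i, g ⟨c i, hP.mem_spectrum_sum_smul c (hne i)⟩ • P i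
  map_one' := by simp [hP.sum_eq_one]
  map_mul' g h := by simp only [ContinuousMap.mul_apply, hP.sum_smul_mul_sum_smul]
  map_zero' := by simp
  map_add' g h := by simp only [ContinuousMap.add_apply, add_smul, Finset.sum_add_distrib]
  commutes' r := by simp [Algebra.algebraMap_eq_smul_one, ← Finset.smul_sum, hP.sum_eq_one]
  map_star' g := by simp [(hP.isSelfAdjoint _).star_eq]

theorem cfc_sum_smul [StarModule ℝ R] [TopologicalSpace R] [T2Space R] [ContinuousAdd R]
    [ContinuousSMul ℝ R] [ContinuousFunctionalCalculus ℝ R IsSelfAdjoint]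
    (hP : IsResolutionOfIdentity P) (hne : ∀ i, P i ≠ 0) (c : ι → ℝ) (f : ℝ → ℝ)
    (hf : ContinuousOn f (spectrum ℝ (∑ i, c i • P i)) := by cfc_cont_tac) :
    cfc f (∑ i, c i • P i) = ∑ i, f (c i) • P i := by
  have hφ : cfcHom (hP.isSelfAdjoint_sum_smul c) = hP.evalStarAlgHom c hne :=
    cfcHom_eq_of_continuous_of_map_id _ _
      (continuous_finsetSum _ fun i _ => (continuous_eval_const _).smul continuous_const) rfl
  rw [cfc_apply f _ (hP.isSelfAdjoint_sum_smul c) hf, hφ]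
  rfl

end IsResolutionOfIdentity

theorem isClosed_setOf_isResolutionOfIdentity [Semiring R] [StarRing R] [TopologicalSpace R]
    [T2Space R] [IsTopologicalSemiring R] [ContinuousStar R] :
    IsClosed {P : ι → R | IsResolutionOfIdentity P} := by
  have hset : {P : ι → R | IsResolutionOfIdentity P} =
      (⋂ i, {P | star (P i) = P i}) ∩ (⋂ i, ⋂ j, {P | P i * P j = if i = j then P i else 0}) ∩
        {P | ∑ i, P i = 1} := by
    ext P
    simp only [Set.mem_inter_iff, Set.mem_iInter, Set.mem_ofPred_eq]
    exact ⟨fun h => ⟨⟨h.1, h.2⟩, h.3⟩, fun ⟨⟨h₁, h₂⟩, h₃⟩ => ⟨h₁, h₂, h₃⟩⟩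
  rw [hset]
  refine ((isClosed_iInter fun i => isClosed_eq (by fun_prop) (by fun_prop)).inter
    (isClosed_iInter fun i => isClosed_iInter fun j => isClosed_eq (by fun_prop) ?_)).inter
    (isClosed_eq (by fun_prop) continuous_const)
  split_ifs <;> fun_prop

end ResolutionOfIdentity

namespace Matrix

variable {n 𝕜 : Type*} [Fintype n] [RCLike 𝕜]

open scoped MatrixOrder in
theorem posSemidef_of_isStarProjection {P : Matrix n n 𝕜} (hP : IsStarProjection P) :
    P.PosSemidef :=
  hP.nonneg.posSemidef

theorem norm_apply_le_one_of_isStarProjection {P : Matrix n n 𝕜} (hP : IsStarProjection P)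
    (k l : n) : ‖P k l‖ ≤ 1 := by
  have hcol (k : n) : ‖P k l‖ ^ 2 ≤ ‖P l l‖ := calc
    ‖P k l‖ ^ 2 ≤ ∑ m, ‖P m l‖ ^ 2 :=
        Finset.single_le_sum (f := fun m => ‖P m l‖ ^ 2) (fun _ _ => by positivity)
          (Finset.mem_univ k)
    _ = RCLike.re ((Pᴴ * P) l l) := by
        rw [mul_apply, map_sum]
        refine Finset.sum_congr rfl fun m _ => ?_
        rw [conjTranspose_apply, RCLike.star_def, RCLike.conj_mul, ← RCLike.ofReal_pow,
          RCLike.ofReal_re]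
    _ ≤ ‖P l l‖ := by
        rw [← star_eq_conjTranspose, hP.isSelfAdjoint.star_eq, hP.isIdempotentElem.eq]
        exact RCLike.re_le_norm _
  have hdiag : ‖P l l‖ ≤ 1 := by nlinarith [hcol l, norm_nonneg (P l l)]
  nlinarith [hcol k, norm_nonneg (P k l)]

theorem PosDef.conjTranspose_mul_mul_same_ne_zero {B C : Matrix n n 𝕜} (hB : B.PosDef)
    (hC : C ≠ 0) : Cᴴ * B * C ≠ 0 := by
  intro h
  refine hC (ext_iff_mulVec.mpr fun x => ?_)
  by_contra hx
  rw [zero_mulVec] at hx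
  have := hB.dotProduct_mulVec_pos hx
  rw [star_mulVec, ← dotProduct_mulVec, mulVec_mulVec, mulVec_mulVec, h, zero_mulVec,
    dotProduct_zero] at this
  exact this.false

theorem trace_mul_pos_of_isStarProjection {P B : Matrix n n 𝕜} (hP : IsStarProjection P)
    (hP0 : P ≠ 0) (hB : B.PosDef) : 0 < (P * B).trace := by
  have hconj : (P * B).trace = (Pᴴ * B * P).trace := by
    rw [← star_eq_conjTranspose, hP.isSelfAdjoint.star_eq, trace_mul_cycle,
      hP.isIdempotentElem.eq]
  have hpsd := hB.posSemidef.conjTranspose_mul_mul_same P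
  rw [hconj]
  exact hpsd.trace_nonneg.lt_of_ne' fun h =>
    hB.conjTranspose_mul_mul_same_ne_zero hP0 (hpsd.trace_eq_zero_iff.mp h)

variable [DecidableEq n]

theorem trace_eq_rank_of_isIdempotentElem {K : Type*} [Field K] {P : Matrix n n K}
    (hP : IsIdempotentElem P) : P.trace = P.rank := by
  rw [← trace_toLin'_eq P]
  exact (LinearMap.IsIdempotentElem.isProj_range _ (hP.map toLinAlgEquiv')).trace

theorem isResolutionOfIdentity_single :
    IsResolutionOfIdentity (fun i : n => single i i (1 : 𝕜)) where
  isSelfAdjoint i := by simp [IsSelfAdjoint, star_eq_conjTranspose, conjTranspose_single]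
  mul_eq i j := by
    split_ifs with h
    · rw [h, single_mul_single_same, mul_one]
    · simp [h]
  sum_eq_one := sum_single_one

theorem IsHermitian.eq_sum_eigenvalues_smul {A : Matrix n n 𝕜} (hA : A.IsHermitian) :
    A = ∑ i, hA.eigenvalues i •
      Unitary.conjStarAlgAut 𝕜 _ hA.eigenvectorUnitary (single i i 1) := by
  conv_lhs => rw [hA.spectral_theorem, ← sum_single_eq_diagonal, map_sum]
  refine Finset.sum_congr rfl fun i _ => ?_
  rw [RCLike.real_smul_eq_coe_smul (K := 𝕜), ← map_smul, smul_single, smul_eq_mul, mul_one]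
  rfl

end Matrix

section MatrixResolution

variable {n ι 𝕜 : Type*} [Fintype n] [DecidableEq n] [Fintype ι] [DecidableEq ι] [RCLike 𝕜]

theorem IsResolutionOfIdentity.posDef_sum_smul {P : ι → Matrix n n 𝕜}
    (hP : IsResolutionOfIdentity P) {c : ι → ℝ} (hc : ∀ i, 0 < c i) : (∑ i, c i • P i).PosDef :=
  (posSemidef_sum _ fun i _ =>
    (posSemidef_of_isStarProjection (hP.isStarProjection i)).smul (hc i).le).posDef_iff_isUnit.mpr
      (hP.isUnit_sum_smul fun i => (hc i).ne')

theorem isCompact_setOf_isResolutionOfIdentity :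
    IsCompact {P : ι → Matrix n n 𝕜 | IsResolutionOfIdentity P} := by
  refine (isCompact_univ_pi fun _ => isCompact_univ_pi fun _ => isCompact_univ_pi fun _ =>
    isCompact_closedBall (0 : 𝕜) 1).of_isClosed_subset
    (isClosed_setOf_isResolutionOfIdentity (R := Matrix n n 𝕜)) ?_
  intro P hP i _ k _ l _
  simpa using norm_apply_le_one_of_isStarProjection (hP.isStarProjection i) k l

end MatrixResolution

section MeasuredRelEntropy

variable {n ι : Type*} [Fintype n] [DecidableEq n] [Fintype ι]

noncomputable def measuredRelEntropy (ρ σ : Matrix n n ℂ) (P : ι → Matrix n n ℂ) : ℝ :=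
  ∑ i, (P i * ρ).trace.re * Real.log ((P i * ρ).trace.re / (P i * σ).trace.re)

noncomputable def variationalObjective (ρ σ ω : Matrix n n ℂ) : ℝ :=
  (ρ * cfc Real.log ω).trace.re + 1 - (σ * ω).trace.re

theorem Matrix.re_trace_mul_sum_smul (B : Matrix n n ℂ) (P : ι → Matrix n n ℂ) (c : ι → ℝ) :
    (B * ∑ i, c i • P i).trace.re = ∑ i, c i * (P i * B).trace.re := by
  simp only [Finset.mul_sum, trace_sum, Complex.re_sum, mul_smul_comm, trace_smul,
    Complex.smul_re, smul_eq_mul, trace_mul_comm B]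

namespace IsResolutionOfIdentity

variable [DecidableEq ι] {P : ι → Matrix n n ℂ}

theorem sum_re_trace_mul (hP : IsResolutionOfIdentity P) (B : Matrix n n ℂ) :
    ∑ i, (P i * B).trace.re = B.trace.re := by
  rw [← Complex.re_sum, ← trace_sum, ← Finset.sum_mul, hP.sum_eq_one, Matrix.one_mul]

theorem re_trace_mul_pos (hP : IsResolutionOfIdentity P) {i : ι} (hi : P i ≠ 0)
    {B : Matrix n n ℂ} (hB : B.PosDef) : 0 < (P i * B).trace.re :=
  (RCLike.pos_iff.mp (trace_mul_pos_of_isStarProjection (hP.isStarProjection i) hi hB)).1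

theorem variationalObjective_sum_smul (hP : IsResolutionOfIdentity P) (hne : ∀ i, P i ≠ 0)
    (ρ σ : Matrix n n ℂ) (w : ι → ℝ) :
    variationalObjective ρ σ (∑ i, w i • P i) =
      ∑ i, (P i * ρ).trace.re * Real.log (w i) + 1 - ∑ i, w i * (P i * σ).trace.re := by
  rw [variationalObjective,
    hP.cfc_sum_smul hne w Real.log (finite_real_spectrum.continuousOn _),
    re_trace_mul_sum_smul, re_trace_mul_sum_smul]
  simp only [mul_comm (Real.log _)]

theorem exists_variationalObjective_eq (hP : IsResolutionOfIdentity P) (hne : ∀ i, P i ≠ 0)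
    {ρ σ : Matrix n n ℂ} (hρ : ρ.PosDef) (hσ : σ.PosDef) (hρ1 : ρ.trace = 1) :
    ∃ ω, ω.PosDef ∧ variationalObjective ρ σ ω = measuredRelEntropy ρ σ P := by
  set p := fun i => (P i * ρ).trace.re
  set q := fun i => (P i * σ).trace.re
  have hq (i : ι) : 0 < q i := hP.re_trace_mul_pos (hne i) hσ
  refine ⟨∑ i, (p i / q i) • P i,
    hP.posDef_sum_smul fun i => div_pos (hP.re_trace_mul_pos (hne i) hρ) (hq i), ?_⟩
  have hsum : ∑ i, p i / q i * q i = 1 := by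
    simp only [div_mul_cancel₀ _ (hq _).ne']
    rw [hP.sum_re_trace_mul, hρ1, Complex.one_re]
  rw [hP.variationalObjective_sum_smul hne, hsum, add_sub_cancel_right]
  rfl

end IsResolutionOfIdentity

theorem Matrix.PosDef.exists_variationalObjective_le {ρ σ ω : Matrix n n ℂ} (hω : ω.PosDef)
    (hρ : ρ.PosDef) (hσ : σ.PosDef) (hρ1 : ρ.trace = 1) :
    ∃ P : n → Matrix n n ℂ, (IsResolutionOfIdentity P ∧ ∀ i, (P i).trace = 1) ∧
      variationalObjective ρ σ ω ≤ measuredRelEntropy ρ σ P := by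
  set P := fun i => Unitary.conjStarAlgAut ℂ _ hω.isHermitian.eigenvectorUnitary (single i i 1)
  have hP : IsResolutionOfIdentity P := isResolutionOfIdentity_single.map _
  have htr (i : n) : (P i).trace = 1 := by simp only [P, trace_map', trace_single_eq_same]
  have hne (i : n) : P i ≠ 0 := fun h => by simpa [h] using htr i
  refine ⟨P, ⟨hP, htr⟩, ?_⟩
  rw [show variationalObjective ρ σ ω =
      variationalObjective ρ σ (∑ i, hω.isHermitian.eigenvalues i • P i) from
    congrArg _ hω.isHermitian.eq_sum_eigenvalues_smul, hP.variationalObjective_sum_smul hne]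
  exact Real.sum_mul_log_add_one_sub_le (fun i => hP.re_trace_mul_pos (hne i) hρ)
    (fun i => hP.re_trace_mul_pos (hne i) hσ) hω.eigenvalues_pos
    (by rw [hP.sum_re_trace_mul, hρ1, Complex.one_re])

theorem exists_isMaxOn_measuredRelEntropy {ρ σ : Matrix n n ℂ} (hρ : ρ.PosDef) (hσ : σ.PosDef) :
    ∃ P₀ ∈ {P : n → Matrix n n ℂ | IsResolutionOfIdentity P ∧ ∀ i, (P i).trace = 1},
      IsMaxOn (measuredRelEntropy ρ σ)
        {P : n → Matrix n n ℂ | IsResolutionOfIdentity P ∧ ∀ i, (P i).trace = 1} P₀ := by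
  have htrace : IsClosed {P : n → Matrix n n ℂ | ∀ i, (P i).trace = 1} := by
    simp only [Set.ofPred_forall]
    exact isClosed_iInter fun i => isClosed_eq (continuous_apply i).matrix_trace continuous_const
  have hcompact : IsCompact
      {P : n → Matrix n n ℂ | IsResolutionOfIdentity P ∧ ∀ i, (P i).trace = 1} :=
    isCompact_setOf_isResolutionOfIdentity.inter_right htrace
  have hpos {B : Matrix n n ℂ} (hB : B.PosDef) (i : n) {P : n → Matrix n n ℂ}
      (hP : IsResolutionOfIdentity P ∧ ∀ i, (P i).trace = 1) : 0 < (P i * B).trace.re :=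
    hP.1.re_trace_mul_pos (fun h => by simpa [h] using hP.2 i) hB
  have hcont (B : Matrix n n ℂ) (i : n) :
      Continuous fun P : n → Matrix n n ℂ => (P i * B).trace.re :=
    Complex.continuous_re.comp ((continuous_apply i).matrix_mul continuous_const).matrix_trace
  refine hcompact.exists_isMaxOn ⟨_, isResolutionOfIdentity_single,
    fun i => trace_single_eq_same i 1⟩ (continuousOn_finsetSum _ fun i _ => ?_)
  exact (hcont ρ i).continuousOn.mul <| ((hcont ρ i).continuousOn.div (hcont σ i).continuousOn
    fun P hP => (hpos hσ i hP).ne').log fun P hP => (div_pos (hpos hρ i hP) (hpos hσ i hP)).ne'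

end MeasuredRelEntropy

theorem isRankOneProjMeas_iff {d : ℕ} {P : Fin d → Matrix (Fin d) (Fin d) ℂ} :
    IsRankOneProjMeas P ↔ IsResolutionOfIdentity P ∧ ∀ i, (P i).trace = 1 := by
  have hrank (hP : IsResolutionOfIdentity P) (i : Fin d) : (P i).rank = 1 ↔ (P i).trace = 1 := by
    rw [trace_eq_rank_of_isIdempotentElem (hP.isStarProjection i).isIdempotentElem,
      Nat.cast_eq_one]
  exact ⟨fun ⟨h₁, h₂, h₃, h₄⟩ => ⟨⟨h₁, h₂, h₃⟩, fun i => (hrank ⟨h₁, h₂, h₃⟩ i).mp (h₄ i)⟩,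
    fun ⟨hP, h⟩ => ⟨hP.1, hP.2, hP.3, fun i => (hrank hP i).mpr (h i)⟩⟩

/-- Variational expression for the projectively measured relative entropy, with the supremum
over `ω` attained for positive definite states. -/
theorem projectively_measured_relEntropy_variational {d : ℕ}
    (ρ σ : Matrix (Fin d) (Fin d) ℂ) (hρ : ρ.PosDef) (hσ : σ.PosDef)
    (hρ1 : ρ.trace = 1) :
    (⨆ P : {P : Fin d → Matrix (Fin d) (Fin d) ℂ // IsRankOneProjMeas P},
        ∑ i, (P.1 i * ρ).trace.re *
          Real.log ((P.1 i * ρ).trace.re / (P.1 i * σ).trace.re))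
      = (⨆ ω : {ω : Matrix (Fin d) (Fin d) ℂ // ω.PosDef},
          ((ρ * mlog ω.1).trace.re + 1 - (σ * ω.1).trace.re))
    ∧ ∃ ω : {ω : Matrix (Fin d) (Fin d) ℂ // ω.PosDef},
        ((ρ * mlog ω.1).trace.re + 1 - (σ * ω.1).trace.re)
          = ⨆ ω' : {ω' : Matrix (Fin d) (Fin d) ℂ // ω'.PosDef},
              ((ρ * mlog ω'.1).trace.re + 1 - (σ * ω'.1).trace.re) := by
  obtain ⟨P₀, hP₀, hmax⟩ := exists_isMaxOn_measuredRelEntropy hρ hσ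
  obtain ⟨ω₀, hω₀, hω₀P₀⟩ :=
    hP₀.1.exists_variationalObjective_eq (fun i h => by simpa [h] using hP₀.2 i) hρ hσ hρ1
  have hF : IsGreatest (Set.range fun P : {P // IsRankOneProjMeas P} => measuredRelEntropy ρ σ P.1)
      (measuredRelEntropy ρ σ P₀) :=
    ⟨⟨⟨P₀, isRankOneProjMeas_iff.mpr hP₀⟩, rfl⟩, by
      rintro _ ⟨P, rfl⟩
      exact hmax (isRankOneProjMeas_iff.mp P.2)⟩
  have hG : IsGreatest (Set.range fun ω : {ω // ω.PosDef} => variationalObjective ρ σ ω.1)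
      (measuredRelEntropy ρ σ P₀) :=
    ⟨⟨⟨ω₀, hω₀⟩, hω₀P₀⟩, by
      rintro _ ⟨⟨ω, hω⟩, rfl⟩
      obtain ⟨P, hP, hle⟩ := hω.exists_variationalObjective_le hρ hσ hρ1
      exact hle.trans (hmax hP)⟩
  have : Nonempty {P // IsRankOneProjMeas P} := ⟨⟨P₀, isRankOneProjMeas_iff.mpr hP₀⟩⟩
  have : Nonempty {ω : Matrix (Fin d) (Fin d) ℂ // ω.PosDef} := ⟨⟨ω₀, hω₀⟩⟩
  exact ⟨hF.isLUB.ciSup_eq.trans hG.isLUB.ciSup_eq.symm,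
    ⟨ω₀, hω₀⟩, hω₀P₀.trans hG.isLUB.ciSup_eq.symm⟩
end

section
/- For α ∈ (0,1) and positive definite ρ (tr ρ = 1) and σ, the quantity Q_α^P(ρ||σ) = inf over rank-1 projective measurements {P_i} of Σ_i tr[P_i ρ]^α tr[P_i σ]^{1−α} equals inf_{ω>0} α tr[ρ ω] + (1−α) tr[σ ω^{α/(α−1)}]. -/
open Matrix
open scoped ComplexOrder

/-!
A positive definite `ω` has a spectral decomposition `ω = ∑ λᵢ Pᵢ` into a rank-one projective
measurement, and then `ω^{α/(α-1)} = ∑ λᵢ^{α/(α-1)} Pᵢ`, so the objective becomes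
`∑ α λᵢ pᵢ + (1 - α) λᵢ^{α/(α-1)} qᵢ` with `pᵢ = tr[Pᵢ ρ]`, `qᵢ = tr[Pᵢ σ]`. Termwise, weighted
AM-GM bounds this below by `∑ pᵢ^α qᵢ^{1-α}`, with equality at `λᵢ = (pᵢ/qᵢ)^{α-1}`. Hence every
`ω` is beaten by its own eigenbasis measurement, and every measurement is matched by the
`ω` diagonal in it with these optimal weights.
-/

structure IsProjMeas {ι A : Type*} [Fintype ι] [DecidableEq ι] [Ring A] [Star A] (P : ι → A) :
    Prop where
  isSelfAdjoint : ∀ i, IsSelfAdjoint (P i)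
  mul_eq_ite : ∀ i j, P i * P j = if i = j then P i else 0
  sum_eq_one : ∑ i, P i = 1

namespace IsProjMeas

variable {ι A : Type*} [Fintype ι] [DecidableEq ι] [Ring A] [StarRing A] {P : ι → A}

theorem map {B F : Type*} [Ring B] [StarRing B] [FunLike F A B] [RingHomClass F A B]
    [StarHomClass F A B] (hP : IsProjMeas P) (φ : F) : IsProjMeas fun i => φ (P i) where
  isSelfAdjoint i := (hP.isSelfAdjoint i).map φ
  mul_eq_ite i j := by rw [← map_mul, hP.mul_eq_ite]; split_ifs <;> simp
  sum_eq_one := by rw [← map_sum, hP.sum_eq_one, map_one]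

variable [Algebra ℝ A]

theorem sum_smul_mul_sum_smul (hP : IsProjMeas P) (a b : ι → ℝ) :
    (∑ i, a i • P i) * (∑ i, b i • P i) = ∑ i, (a i * b i) • P i := by
  simp [Finset.sum_mul_sum, hP.mul_eq_ite, smul_smul, mul_comm]

theorem sum_smul_pow (hP : IsProjMeas P) (m : ι → ℝ) (k : ℕ) :
    (∑ i, m i • P i) ^ k = ∑ i, m i ^ k • P i := by
  induction k with
  | zero => simp [hP.sum_eq_one]
  | succ k ih => simp only [pow_succ, ih, hP.sum_smul_mul_sum_smul]

theorem aeval_sum_smul (hP : IsProjMeas P) (m : ι → ℝ) (q : Polynomial ℝ) :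
    Polynomial.aeval (∑ i, m i • P i) q = ∑ i, q.eval (m i) • P i := by
  simp only [Polynomial.aeval_eq_sum_range, hP.sum_smul_pow, Finset.smul_sum, smul_smul,
    Polynomial.eval_eq_sum_range, Finset.sum_smul]
  exact Finset.sum_comm

theorem isUnit_sum_smul (hP : IsProjMeas P) {m : ι → ℝ} (hm : ∀ i, m i ≠ 0) :
    IsUnit (∑ i, m i • P i) := by
  have inv_mul : ∀ a b : ι → ℝ, (∀ i, a i * b i = 1) →
      (∑ i, a i • P i) * (∑ i, b i • P i) = 1 := fun a b hab => by
    simp [hP.sum_smul_mul_sum_smul, hab, hP.sum_eq_one]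
  exact ⟨⟨_, ∑ i, (m i)⁻¹ • P i, inv_mul _ _ fun i => mul_inv_cancel₀ (hm i),
    inv_mul _ _ fun i => inv_mul_cancel₀ (hm i)⟩, rfl⟩

theorem spectrum_sum_smul_subset (hP : IsProjMeas P) (m : ι → ℝ) :
    spectrum ℝ (∑ i, m i • P i) ⊆ Set.range m := by
  intro μ hμ
  by_contra hμm
  have hshift : algebraMap ℝ A μ - ∑ i, m i • P i = ∑ i, (μ - m i) • P i := by
    simp [Algebra.algebraMap_eq_smul_one, ← hP.sum_eq_one, Finset.smul_sum, sub_smul]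
  refine spectrum.mem_iff.mp hμ ?_
  rw [hshift]
  exact hP.isUnit_sum_smul fun i h => hμm ⟨i, (sub_eq_zero.mp h).symm⟩

theorem isSelfAdjoint_sum_smul [StarModule ℝ A] (hP : IsProjMeas P) (m : ι → ℝ) :
    IsSelfAdjoint (∑ i, m i • P i) :=
  isSelfAdjoint_sum _ fun i _ => (IsSelfAdjoint.all (m i)).smul (hP.isSelfAdjoint i)

-- the spectrum is finite, so `f` agrees on it with a Lagrange interpolation polynomial
theorem cfc_sum_smul [StarModule ℝ A] [TopologicalSpace A]
    [ContinuousFunctionalCalculus ℝ A IsSelfAdjoint] (hP : IsProjMeas P) (m : ι → ℝ)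
    (f : ℝ → ℝ) : cfc f (∑ i, m i • P i) = ∑ i, f (m i) • P i := by
  classical
  set q := Lagrange.interpolate (Finset.univ.image m) id f
  have hq : ∀ i, q.eval (m i) = f (m i) := fun i =>
    Lagrange.eval_interpolate_at_node f (Set.injOn_id _)
      (Finset.mem_image_of_mem m (Finset.mem_univ i))
  have hfq : cfc f (∑ i, m i • P i) = cfc q.eval (∑ i, m i • P i) := by
    refine cfc_congr fun x hx => ?_
    obtain ⟨i, rfl⟩ := hP.spectrum_sum_smul_subset m hx
    exact (hq i).symm
  rw [hfq, cfc_polynomial q _ (hP.isSelfAdjoint_sum_smul m), hP.aeval_sum_smul]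
  simp only [hq]

end IsProjMeas

namespace Matrix

variable {n : Type*} [Fintype n] [DecidableEq n]

theorem isProjMeas_single {R : Type*} [CommRing R] [StarRing R] :
    IsProjMeas fun i : n => single i i (1 : R) where
  isSelfAdjoint i := by simp [IsSelfAdjoint, star_eq_conjTranspose]
  mul_eq_ite i j := by
    split_ifs with h
    · rw [h, single_mul_single_same, mul_one]
    · exact single_mul_single_of_ne (h := h) ..
  sum_eq_one := sum_single_one

theorem rank_single_one {K : Type*} [Field K] (i : n) : (single i i (1 : K)).rank = 1 := by
  classical
  rw [← diagonal_single, rank_diagonal]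
  simp [Pi.single_apply]

theorem IsHermitian.exists_isProjMeas_eq_sum_smul {𝕜 : Type*} [RCLike 𝕜] {A : Matrix n n 𝕜}
    (hA : A.IsHermitian) : ∃ P : n → Matrix n n 𝕜,
      IsProjMeas P ∧ (∀ i, (P i).rank = 1) ∧ A = ∑ i, hA.eigenvalues i • P i := by
  set U := hA.eigenvectorUnitary
  refine ⟨fun i => Unitary.conjStarAlgAut 𝕜 _ U (single i i 1), isProjMeas_single.map _,
    fun i => ?_, ?_⟩
  · dsimp only
    rw [Unitary.conjStarAlgAut_apply,
      rank_mul_eq_left_of_isUnit_det _ _ (by simpa using UnitaryGroup.det_isUnit (star U)),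
      rank_mul_eq_right_of_isUnit_det _ _ (UnitaryGroup.det_isUnit U), rank_single_one]
  · conv_lhs => rw [hA.spectral_theorem, ← sum_single_eq_diagonal]
    simp only [map_sum, Unitary.conjStarAlgAut_apply, Function.comp_apply]
    refine Finset.sum_congr rfl fun i _ => ?_
    rw [← Matrix.smul_mul, ← Matrix.mul_smul, smul_single, RCLike.real_smul_eq_coe_mul, mul_one]

theorem PosDef.trace_mul_pos_of_idempotent {𝕜 : Type*} [RCLike 𝕜] {ρ P : Matrix n n 𝕜}
    (hρ : ρ.PosDef) (hP : P.IsHermitian) (hPP : P * P = P) (hP0 : P ≠ 0) :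
    0 < (P * ρ).trace := by
  have hPSD : (Pᴴ * ρ * P).PosSemidef := hρ.posSemidef.conjTranspose_mul_mul_same P
  have htrace : (P * ρ).trace = (Pᴴ * ρ * P).trace := by
    rw [hP.eq, trace_mul_cycle, hPP]
  rw [htrace]
  refine hPSD.trace_nonneg.lt_of_ne (Ne.symm fun h0 => hP0 ?_)
  have hPx : ∀ x, P *ᵥ x = 0 := fun x => by
    by_contra hx
    have := hρ.dotProduct_mulVec_pos hx
    rw [star_mulVec, ← dotProduct_mulVec, mulVec_mulVec, mulVec_mulVec,
      (hPSD.trace_eq_zero_iff).mp h0, zero_mulVec, dotProduct_zero] at this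
    exact this.false
  ext i j
  simpa using congrFun (hPx (Pi.single j 1)) i

theorem PosDef.exists_isProjMeas_eq_sum_smul {𝕜 : Type*} [RCLike 𝕜] {A : Matrix n n 𝕜}
    (hA : A.PosDef) : ∃ (P : n → Matrix n n 𝕜) (m : n → ℝ),
      IsProjMeas P ∧ (∀ i, (P i).rank = 1) ∧ (∀ i, 0 < m i) ∧ A = ∑ i, m i • P i :=
  let ⟨P, hP, hrank, hA_eq⟩ := hA.isHermitian.exists_isProjMeas_eq_sum_smul
  ⟨P, _, hP, hrank, hA.eigenvalues_pos, hA_eq⟩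

theorem _root_.IsProjMeas.posDef_sum_smul {ι 𝕜 : Type*} [Fintype ι] [DecidableEq ι]
    [RCLike 𝕜] {P : ι → Matrix n n 𝕜} (hP : IsProjMeas P) {m : ι → ℝ}
    (hm : ∀ i, 0 < m i) : (∑ i, m i • P i).PosDef := by
  have hPSD : (∑ i, m i • P i).PosSemidef := by
    refine posSemidef_sum _ fun i _ => ?_
    have hPi : P i = (P i)ᴴ * P i := by
      rw [← star_eq_conjTranspose, (hP.isSelfAdjoint i).star_eq, hP.mul_eq_ite, if_pos rfl]
    rw [hPi]
    exact (posSemidef_conjTranspose_mul_self (P i)).smul (hm i).le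
  exact hPSD.posDef_iff_isUnit.mpr (hP.isUnit_sum_smul fun i => (hm i).ne')

end Matrix

theorem Matrix.trace_mul_sum_smul_re {ι n : Type*} [Fintype ι] [Fintype n]
    (τ : Matrix n n ℂ) (P : ι → Matrix n n ℂ) (m : ι → ℝ) :
    (τ * ∑ i, m i • P i).trace.re = ∑ i, m i * (P i * τ).trace.re := by
  simp [Matrix.mul_sum, trace_sum, trace_mul_comm τ]

theorem geom_mean_le_variational {α p q m : ℝ} (hα0 : 0 ≤ α) (hα1 : α < 1) (hp : 0 ≤ p)
    (hq : 0 ≤ q) (hm : 0 < m) :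
    p ^ α * q ^ (1 - α) ≤ α * (m * p) + (1 - α) * (m ^ (α / (α - 1)) * q) := by
  have hexp : α / (α - 1) * (1 - α) = -α := by
    field_simp [(sub_neg.mpr hα1).ne]
    ring
  calc p ^ α * q ^ (1 - α) = (m * p) ^ α * (m ^ (α / (α - 1)) * q) ^ (1 - α) := by
        rw [Real.mul_rpow hm.le hp, Real.mul_rpow (by positivity) hq, ← Real.rpow_mul hm.le, hexp,
          Real.rpow_neg hm.le]
        field_simp
    _ ≤ α * (m * p) + (1 - α) * (m ^ (α / (α - 1)) * q) :=
        Real.geom_mean_le_arith_mean2_weighted hα0 (by linarith) (by positivity) (by positivity)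
          (by ring)

theorem variational_eq_geom_mean {α p q : ℝ} (hα : α ≠ 1) (hp : 0 < p) (hq : 0 < q) :
    α * ((p / q) ^ (α - 1) * p) + (1 - α) * (((p / q) ^ (α - 1)) ^ (α / (α - 1)) * q) =
      p ^ α * q ^ (1 - α) := by
  have hexp : (α - 1) * (α / (α - 1)) = α := by field_simp [sub_ne_zero.mpr hα]
  have hterm₁ : (p / q) ^ (α - 1) * p = p ^ α * q ^ (1 - α) := by
    rw [Real.div_rpow hp.le hq.le, Real.rpow_sub_one hp.ne', Real.rpow_sub hq, Real.rpow_one]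
    field_simp
    rw [← Real.rpow_add hq, add_sub_cancel, Real.rpow_one]
  have hterm₂ : ((p / q) ^ (α - 1)) ^ (α / (α - 1)) * q = p ^ α * q ^ (1 - α) := by
    rw [← Real.rpow_mul (div_pos hp hq).le, hexp, Real.div_rpow hp.le hq.le, Real.rpow_sub hq,
      Real.rpow_one]
    field_simp
  rw [hterm₁, hterm₂]
  ring

theorem IsProjMeas.mpow_sum_smul {d : ℕ} {P : Fin d → Matrix (Fin d) (Fin d) ℂ}
    (hP : IsProjMeas P) (m : Fin d → ℝ) (p : ℝ) :
    mpow (∑ i, m i • P i) p = ∑ i, m i ^ p • P i :=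
  hP.cfc_sum_smul m _

namespace IsRankOneProjMeas

variable {d : ℕ} {P : Fin d → Matrix (Fin d) (Fin d) ℂ}

theorem isProjMeas (hP : IsRankOneProjMeas P) : IsProjMeas P :=
  ⟨hP.1, hP.2.1, hP.2.2.1⟩

theorem of_isProjMeas (hP : IsProjMeas P) (hrank : ∀ i, (P i).rank = 1) :
    IsRankOneProjMeas P :=
  ⟨hP.isSelfAdjoint, hP.mul_eq_ite, hP.sum_eq_one, hrank⟩

theorem trace_mul_re_pos (hP : IsRankOneProjMeas P) {τ : Matrix (Fin d) (Fin d) ℂ}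
    (hτ : τ.PosDef) (i : Fin d) : 0 < (P i * τ).trace.re := by
  have hP0 : P i ≠ 0 := fun h => by simpa [h] using hP.2.2.2 i
  exact (Complex.pos_iff.mp
    (hτ.trace_mul_pos_of_idempotent (hP.1 i) (by simpa using hP.2.1 i i) hP0)).1

end IsRankOneProjMeas

theorem measured_renyi_variational_lt_one_general {d : ℕ} (α : ℝ) (hα0 : 0 < α) (hα1 : α < 1)
    (ρ σ : Matrix (Fin d) (Fin d) ℂ) (hρ : ρ.PosDef) (hσ : σ.PosDef) :
    (⨅ P : {P : Fin d → Matrix (Fin d) (Fin d) ℂ // IsRankOneProjMeas P},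
        ∑ i, ((P.1 i * ρ).trace.re) ^ α * ((P.1 i * σ).trace.re) ^ (1 - α))
      = ⨅ ω : {ω : Matrix (Fin d) (Fin d) ℂ // ω.PosDef},
          (α * (ρ * ω.1).trace.re + (1 - α) * (σ * mpow ω.1 (α / (α - 1))).trace.re) := by
  have objective_eq : ∀ {P : Fin d → Matrix (Fin d) (Fin d) ℂ}, IsProjMeas P → ∀ m : Fin d → ℝ,
      α * (ρ * ∑ i, m i • P i).trace.re
          + (1 - α) * (σ * mpow (∑ i, m i • P i) (α / (α - 1))).trace.re
        = ∑ i, (α * (m i * (P i * ρ).trace.re)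
          + (1 - α) * (m i ^ (α / (α - 1)) * (P i * σ).trace.re)) := fun hP m => by
    rw [hP.mpow_sum_smul, Matrix.trace_mul_sum_smul_re, Matrix.trace_mul_sum_smul_re,
      Finset.mul_sum, Finset.mul_sum, ← Finset.sum_add_distrib]
  refine csInf_eq_csInf_of_forall_exists_le ?_ ?_
  · rintro _ ⟨⟨P, hP⟩, rfl⟩
    have hp := hP.trace_mul_re_pos hρ
    have hq := hP.trace_mul_re_pos hσ
    set m := fun i => ((P i * ρ).trace.re / (P i * σ).trace.re) ^ (α - 1)
    have hm : ∀ i, 0 < m i := fun i => Real.rpow_pos_of_pos (div_pos (hp i) (hq i)) _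
    refine ⟨_, ⟨⟨_, hP.isProjMeas.posDef_sum_smul hm⟩, rfl⟩, le_of_eq ?_⟩
    dsimp only
    rw [objective_eq hP.isProjMeas]
    exact Finset.sum_congr rfl fun i _ => variational_eq_geom_mean hα1.ne (hp i) (hq i)
  · rintro _ ⟨⟨ω, hω⟩, rfl⟩
    obtain ⟨P, m, hP, hrank, hm, rfl⟩ := hω.exists_isProjMeas_eq_sum_smul
    have hP₁ := IsRankOneProjMeas.of_isProjMeas hP hrank
    refine ⟨_, ⟨⟨P, hP₁⟩, rfl⟩, ?_⟩
    dsimp only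
    rw [objective_eq hP]
    exact Finset.sum_le_sum fun i _ => geom_mean_le_variational hα0.le hα1
      (hP₁.trace_mul_re_pos hρ i).le (hP₁.trace_mul_re_pos hσ i).le (hm i)

/-- Variational expression for the projectively measured Rényi quantity `Q_α^P`, `α ∈ (0,1)`. -/
theorem measured_renyi_variational_lt_one {d : ℕ} (α : ℝ) (hα0 : 0 < α) (hα1 : α < 1)
    (ρ σ : Matrix (Fin d) (Fin d) ℂ) (hρ : ρ.PosDef) (hσ : σ.PosDef)
    (hρ1 : ρ.trace = 1) :
    (⨅ P : {P : Fin d → Matrix (Fin d) (Fin d) ℂ // IsRankOneProjMeas P},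
        ∑ i, ((P.1 i * ρ).trace.re) ^ α * ((P.1 i * σ).trace.re) ^ (1 - α))
      = ⨅ ω : {ω : Matrix (Fin d) (Fin d) ℂ // ω.PosDef},
          (α * (ρ * ω.1).trace.re + (1 - α) * (σ * mpow ω.1 (α / (α - 1))).trace.re) :=
  measured_renyi_variational_lt_one_general α hα0 hα1 ρ σ hρ hσ
end

section
/- For α ∈ (1,∞) and positive definite ρ (tr ρ = 1) and σ: sup_{ω>0} [α tr(ρ ω^{1−1/α}) + (1−α) tr(σ ω)] = sup_{ω>0} tr(ρ ω^{1−1/α})^α · tr(σ ω)^{1−α}. -/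
open Matrix
open scoped ComplexOrder

/-! With `A = tr (ρ ω^(1-1/α))` and `B = tr (σ ω)`, Bernoulli's inequality
`1 + α s ≤ (1 + s)^α` at `s = A/B - 1`, multiplied by `B`, gives
`α A + (1 - α) B ≤ A^α B^(1-α)`: the sum form is dominated pointwise by the product form.
Conversely the product form is invariant under `ω ↦ c ω`, while at `c = (A/B)^α` both summands
of the sum form equal `A^α B^(1-α)`; so every value of the product form is attained by the sum
form. -/

theorem iSup_eq_iSup_of_le_of_exists_le {ι α : Type*} [ConditionallyCompleteLinearOrder α]
    {f g : ι → α} (hle : ∀ i, f i ≤ g i) (hex : ∀ i, ∃ j, g i ≤ f j) :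
    ⨆ i, f i = ⨆ i, g i :=
  csSup_eq_csSup_of_forall_exists_le (by rintro _ ⟨i, rfl⟩; exact ⟨g i, ⟨i, rfl⟩, hle i⟩)
    (by rintro _ ⟨i, rfl⟩; obtain ⟨j, hj⟩ := hex i; exact ⟨f j, ⟨j, rfl⟩, hj⟩)

namespace Real

variable {A B α : ℝ}

theorem rpow_mul_rpow_one_sub (hA : 0 ≤ A) (hB : 0 < B) (α : ℝ) :
    A ^ α * B ^ (1 - α) = (A / B) ^ α * B := by
  rw [div_rpow hA hB.le, rpow_sub hB, rpow_one]
  field_simp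

theorem mul_add_one_sub_mul_le_rpow_mul_rpow (hA : 0 ≤ A) (hB : 0 < B) (hα : 1 ≤ α) :
    α * A + (1 - α) * B ≤ A ^ α * B ^ (1 - α) := by
  have h := one_add_mul_self_le_rpow_one_add (s := A / B - 1)
    (by linarith [div_nonneg hA hB.le]) hα
  rw [add_sub_cancel] at h
  calc α * A + (1 - α) * B = B * (1 + α * (A / B - 1)) := by field_simp; ring
    _ ≤ B * (A / B) ^ α := mul_le_mul_of_nonneg_left h hB.le
    _ = A ^ α * B ^ (1 - α) := by rw [rpow_mul_rpow_one_sub hA hB, mul_comm]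

theorem mul_add_one_sub_mul_eq_rpow_mul_rpow (hA : 0 < A) (hB : 0 < B) (hα : α ≠ 0) :
    α * (((A / B) ^ α) ^ (1 - 1 / α) * A) + (1 - α) * ((A / B) ^ α * B) =
      A ^ α * B ^ (1 - α) := by
  have hAB : 0 < A / B := div_pos hA hB
  have hfirst : ((A / B) ^ α) ^ (1 - 1 / α) * A = (A / B) ^ α * B := by
    rw [← rpow_mul hAB.le, show α * (1 - 1 / α) = α - 1 by field_simp, rpow_sub hAB, rpow_one]
    field_simp
  rw [hfirst, ← rpow_mul_rpow_one_sub hA.le hB]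
  ring

end Real

namespace Matrix.PosDef

section

variable {n : Type*} [Fintype n] [DecidableEq n]

open scoped MatrixOrder in
theorem trace_mul_re_pos [Nonempty n] {P Q : Matrix n n ℂ} (hP : P.PosDef) (hQ : Q.PosDef) : 0 < (P * Q).trace.re := by
  obtain ⟨S, hS, rfl⟩ := CStarAlgebra.isStrictlyPositive_iff_eq_star_mul_self.mp
    hQ.isStrictlyPositive
  have hconj : (S * P * star S).PosDef := (IsUnit.posDef_star_right_conjugate_iff hS).2 hP
  rw [← mul_assoc, trace_mul_comm, ← mul_assoc]
  exact (RCLike.pos_iff.1 hconj.trace_pos).1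

open scoped MatrixOrder in
theorem spectrum_pos {ω : Matrix n n ℂ} (hω : ω.PosDef) : ∀ x ∈ spectrum ℝ ω, 0 < x :=
  (StarOrderedRing.isStrictlyPositive_iff_spectrum_pos ω hω.1).1 hω.isStrictlyPositive

theorem continuousOn_rpow_const_spectrum {ω : Matrix n n ℂ} (hω : ω.PosDef) {c : ℝ}
    (hc : 0 < c) (p : ℝ) : ContinuousOn (fun t : ℝ => t ^ p) ((c * ·) '' spectrum ℝ ω) :=
  continuousOn_id.rpow_const <| by
    rintro - ⟨x, hx, rfl⟩
    exact .inl (mul_pos hc (hω.spectrum_pos x hx)).ne'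

end

variable {d : ℕ} {ω : Matrix (Fin d) (Fin d) ℂ}

theorem mpow_smul (hω : ω.PosDef) {c : ℝ} (hc : 0 < c) (p : ℝ) :
    mpow (c • ω) p = c ^ p • mpow ω p := by
  have hcont : ContinuousOn (fun t : ℝ => t ^ p) (spectrum ℝ ω) := by
    simpa using hω.continuousOn_rpow_const_spectrum one_pos p
  refine (cfc_comp_const_mul c _ ω (hω.continuousOn_rpow_const_spectrum hc p) hω.1).symm.trans ?_
  rw [mpow, ← cfc_const_mul _ _ ω hcont]
  exact cfc_congr fun t ht => Real.mul_rpow hc.le (hω.spectrum_pos t ht).le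

open scoped MatrixOrder in
theorem mpow (hω : ω.PosDef) (p : ℝ) : (mpow ω p).PosDef := by
  refine IsStrictlyPositive.posDef ((cfc_isStrictlyPositive_iff _ ω ?_ hω.1).2 fun x hx => ?_)
  · simpa using hω.continuousOn_rpow_const_spectrum one_pos p
  · exact Real.rpow_pos_of_pos (hω.spectrum_pos x hx) p

end Matrix.PosDef

/-- Equality of the two variational expressions (sum form vs product form), `α > 1`. -/
theorem renyi_variational_product_form_gt_one {d : ℕ} (α : ℝ) (hα : 1 < α)
    (ρ σ : Matrix (Fin d) (Fin d) ℂ) (hρ : ρ.PosDef) (hσ : σ.PosDef)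
    (hρ1 : ρ.trace = 1) :
    (⨆ ω : {ω : Matrix (Fin d) (Fin d) ℂ // ω.PosDef},
        (α * (ρ * mpow ω.1 (1 - 1 / α)).trace.re + (1 - α) * (σ * ω.1).trace.re))
      = ⨆ ω : {ω : Matrix (Fin d) (Fin d) ℂ // ω.PosDef},
          (((ρ * mpow ω.1 (1 - 1 / α)).trace.re) ^ α * ((σ * ω.1).trace.re) ^ (1 - α)) := by
  have : Nonempty (Fin d) := by
    by_contra h
    simp [not_nonempty_iff.1 h, trace] at hρ1
  have hA (ω : Matrix (Fin d) (Fin d) ℂ) (hω : ω.PosDef) :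
      0 < (ρ * mpow ω (1 - 1 / α)).trace.re := hρ.trace_mul_re_pos (hω.mpow _)
  have hB (ω : Matrix (Fin d) (Fin d) ℂ) (hω : ω.PosDef) : 0 < (σ * ω).trace.re :=
    hσ.trace_mul_re_pos hω
  refine iSup_eq_iSup_of_le_of_exists_le
    (fun ω => Real.mul_add_one_sub_mul_le_rpow_mul_rpow (hA ω ω.2).le (hB ω ω.2) hα.le)
    fun ⟨ω, hω⟩ => ?_
  have hc := Real.rpow_pos_of_pos (div_pos (hA ω hω) (hB ω hω)) α
  refine ⟨⟨_ • ω, hω.smul hc⟩, le_of_eq ?_⟩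
  simp only [hω.mpow_smul hc, mul_smul_comm, trace_smul, Complex.smul_re, smul_eq_mul]
  exact (Real.mul_add_one_sub_mul_eq_rpow_mul_rpow (hA ω hω) (hB ω hω) (by positivity)).symm
end

section
/- Golden–Thompson inequality: for Hermitian d×d matrices X and Y, tr[exp(X+Y)] ≤ tr[exp(X) exp(Y)]. -/
open Matrix
open scoped ComplexOrder

/-!
By the Lie product formula, `exp (X + Y)` is the limit of `(exp (X / 2 ^ k) exp (Y / 2 ^ k)) ^ 2 ^ k`.
For Hermitian `A`, `B` one has `Re tr ((A B) ^ 2 ^ k) ≤ Re tr (A ^ 2 ^ k B ^ 2 ^ k)`, which for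
`A = exp (X / 2 ^ k)`, `B = exp (Y / 2 ^ k)` bounds every term by `Re tr (exp X exp Y)`.
This trace inequality is proved by induction on `k`, jointly with
`Re tr (S ^ 2 ^ k Sᴴ ^ 2 ^ k) ≤ Re tr ((S Sᴴ) ^ 2 ^ k)`; each doubling step uses only cyclicity of
the trace and `2 Re tr (P Qᴴ) ≤ Re tr (P Pᴴ) + Re tr (Q Qᴴ)`.
-/

open Filter Topology NormedSpace

section LieProduct

variable {𝔸 : Type*} [NormedRing 𝔸]

theorem norm_pow_sub_pow_le [NormOneClass 𝔸] {a b : 𝔸} {K : ℝ} (ha : ‖a‖ ≤ K) (hb : ‖b‖ ≤ K)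
    (n : ℕ) : ‖a ^ n - b ^ n‖ ≤ n * K ^ (n - 1) * ‖a - b‖ := by
  induction n with
  | zero => simp
  | succ n ih =>
    have hK : 0 ≤ K := (norm_nonneg a).trans ha
    have hbn : ‖b ^ n‖ ≤ K ^ n := (norm_pow_le b n).trans (pow_le_pow_left₀ (norm_nonneg b) hb n)
    calc ‖a ^ (n + 1) - b ^ (n + 1)‖ = ‖a * (a ^ n - b ^ n) + (a - b) * b ^ n‖ := by
          rw [pow_succ' a, pow_succ' b]; noncomm_ring
      _ ≤ K * (n * K ^ (n - 1) * ‖a - b‖) + ‖a - b‖ * K ^ n := by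
          refine (norm_add_le _ _).trans (add_le_add ((norm_mul_le _ _).trans ?_)
            ((norm_mul_le _ _).trans ?_))
          · exact mul_le_mul ha ih (norm_nonneg _) hK
          · exact mul_le_mul_of_nonneg_left hbn (norm_nonneg _)
      _ = (n + 1 : ℕ) * K ^ (n + 1 - 1) * ‖a - b‖ := by
          rcases n with _ | n
          · simp
          · push_cast; simp only [pow_succ]; ring

variable [NormedAlgebra ℝ 𝔸] [CompleteSpace 𝔸]

theorem NormedSpace.exp_inv_natCast_smul_pow (x : 𝔸) {n : ℕ} (hn : n ≠ 0) :
    exp ((n : ℝ)⁻¹ • x) ^ n = exp x := by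
  let _ : NormedAlgebra ℚ 𝔸 := NormedAlgebra.restrictScalars ℚ ℝ 𝔸
  rw [← exp_nsmul, ← Nat.cast_smul_eq_nsmul ℝ, smul_smul,
    mul_inv_cancel₀ (Nat.cast_ne_zero.mpr hn), one_smul]

variable [NormOneClass 𝔸]

theorem NormedSpace.norm_exp_le_exp_norm (x : 𝔸) : ‖exp x‖ ≤ Real.exp ‖x‖ := by
  refine (exp_series_hasSum_exp' (𝕂 := ℝ) x).norm_le_of_bounded
    (Real.exp_eq_exp_ℝ ▸ expSeries_div_hasSum_exp ‖x‖) fun n => ?_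
  rw [norm_smul, norm_inv, Real.norm_natCast, inv_mul_eq_div]
  gcongr
  exact norm_pow_le x n

/- The defect `f t = exp (t x) exp (t y) - exp (t (x + y))` has derivative `0` at `0`, so
`n • f (1 / n) → 0`; telescoping `a ^ n - b ^ n` loses only a factor `n` and a bounded power. -/
theorem NormedSpace.lie_product_formula (x y : 𝔸) :
    Tendsto (fun n : ℕ => (exp ((n : ℝ)⁻¹ • x) * exp ((n : ℝ)⁻¹ • y)) ^ n) atTop
      (𝓝 (exp (x + y))) := by
  set f : ℝ → 𝔸 := fun t => exp (t • x) * exp (t • y) - exp (t • (x + y))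
  have hf : HasDerivAt f 0 0 :=
    (((hasDerivAt_exp_smul_const x (0 : ℝ)).mul (hasDerivAt_exp_smul_const y 0)).sub
      (hasDerivAt_exp_smul_const (x + y) 0)).congr_deriv (by simp)
  have hslope : Tendsto (fun n : ℕ => (n : ℝ) • f (n : ℝ)⁻¹) atTop (𝓝 0) := by
    have hinv : Tendsto (fun n : ℕ => (n : ℝ)⁻¹) atTop (𝓝[≠] 0) :=
      (tendsto_inv_atTop_nhdsGT_zero.comp tendsto_natCast_atTop_atTop).mono_right
        (nhdsWithin_mono _ fun t ht => ht.ne')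
    simpa [Function.comp_def, slope_def_module, f] using
      (hasDerivAt_iff_tendsto_slope.mp hf).comp hinv
  rw [tendsto_iff_norm_sub_tendsto_zero]
  refine squeeze_zero' (Eventually.of_forall fun n => norm_nonneg _) ?_
    ((hslope.norm.const_mul (Real.exp (‖x‖ + ‖y‖))).trans (by simp))
  filter_upwards [eventually_ne_atTop 0] with n hn
  set t : ℝ := (n : ℝ)⁻¹
  have ht : 0 ≤ t := inv_nonneg.mpr n.cast_nonneg
  set K := Real.exp (t * (‖x‖ + ‖y‖))
  have hexp (z : 𝔸) : ‖exp (t • z)‖ ≤ Real.exp (t * ‖z‖) := by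
    simpa only [norm_smul, Real.norm_of_nonneg ht] using norm_exp_le_exp_norm (t • z)
  have ha : ‖exp (t • x) * exp (t • y)‖ ≤ K := by
    refine (norm_mul_le _ _).trans ((mul_le_mul (hexp x) (hexp y) (norm_nonneg _)
      (Real.exp_pos _).le).trans_eq ?_)
    rw [← Real.exp_add, ← mul_add]
  have hb : ‖exp (t • (x + y))‖ ≤ K :=
    (hexp _).trans (Real.exp_le_exp.mpr (mul_le_mul_of_nonneg_left (norm_add_le _ _) ht))
  have hKn : K ^ n = Real.exp (‖x‖ + ‖y‖) := by
    rw [← Real.exp_nat_mul, ← mul_assoc, mul_inv_cancel₀ (Nat.cast_ne_zero.mpr hn), one_mul]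
  calc ‖(exp (t • x) * exp (t • y)) ^ n - exp (x + y)‖
      = ‖(exp (t • x) * exp (t • y)) ^ n - exp (t • (x + y)) ^ n‖ := by
        rw [exp_inv_natCast_smul_pow _ hn]
    _ ≤ (n * ‖f t‖) * K ^ (n - 1) := by
        simpa only [mul_right_comm _ (K ^ _)] using norm_pow_sub_pow_le ha hb n
    _ ≤ (n * ‖f t‖) * K ^ n := by
        gcongr
        · exact Real.one_le_exp (by positivity)
        · omega
    _ = Real.exp (‖x‖ + ‖y‖) * ‖(n : ℝ) • f t‖ := by
        rw [hKn, norm_smul, Real.norm_natCast, mul_comm]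

end LieProduct

namespace Matrix

variable {ι : Type*} [Fintype ι]

theorem re_trace_mul_conjTranspose_self_nonneg (M : Matrix ι ι ℂ) :
    0 ≤ (trace (M * Mᴴ)).re :=
  (Complex.le_def.mp (posSemidef_self_mul_conjTranspose M).trace_nonneg).1

theorem two_mul_re_trace_mul_conjTranspose_le (P Q : Matrix ι ι ℂ) :
    2 * (trace (P * Qᴴ)).re ≤ (trace (P * Pᴴ)).re + (trace (Q * Qᴴ)).re := by
  have hsq := re_trace_mul_conjTranspose_self_nonneg (P - Q)
  have hswap : (trace (Q * Pᴴ)).re = (trace (P * Qᴴ)).re := by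
    rw [← conjTranspose_conjTranspose Q, ← conjTranspose_mul, trace_conjTranspose,
      conjTranspose_conjTranspose, Complex.star_def, Complex.conj_re]
  simp only [conjTranspose_sub, sub_mul, mul_sub, trace_sub, Complex.sub_re] at hsq
  linarith

theorem re_trace_mul_self_le (M : Matrix ι ι ℂ) : (trace (M * M)).re ≤ (trace (M * Mᴴ)).re := by
  have h := two_mul_re_trace_mul_conjTranspose_le M Mᴴ
  rw [conjTranspose_conjTranspose, trace_mul_comm Mᴴ M] at h
  linarith

variable [DecidableEq ι]

/- The statement involves only the topology, so any submultiplicative norm may be used. -/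
theorem lie_product_formula {𝕜 : Type*} [RCLike 𝕜] (X Y : Matrix ι ι 𝕜) :
    Tendsto (fun n : ℕ => (exp ((n : ℝ)⁻¹ • X) * exp ((n : ℝ)⁻¹ • Y)) ^ n) atTop
      (𝓝 (exp (X + Y))) := by
  cases isEmpty_or_nonempty ι
  · exact tendsto_const_nhds.congr fun n => Subsingleton.elim _ _
  let _ : NormedRing (Matrix ι ι 𝕜) := Matrix.linftyOpNormedRing
  let _ : NormedAlgebra ℝ (Matrix ι ι 𝕜) := Matrix.linftyOpNormedAlgebra
  have _ : NormOneClass (Matrix ι ι 𝕜) := linfty_opNormOneClass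
  exact NormedSpace.lie_product_formula X Y

theorem trace_mul_pow_comm {R : Type*} [CommSemiring R] (A B : Matrix ι ι R) (n : ℕ) :
    trace ((A * B) ^ n) = trace ((B * A) ^ n) := by
  cases n with
  | zero => rfl
  | succ n => rw [pow_succ, ← mul_assoc, mul_pow_mul, trace_mul_cycle, ← pow_succ']

theorem re_trace_mul_pow_two_mul_le {n : ℕ}
    (hS : ∀ S : Matrix ι ι ℂ, (trace (S ^ n * Sᴴ ^ n)).re ≤ (trace ((S * Sᴴ) ^ n)).re)
    (hAB : ∀ A B : Matrix ι ι ℂ, A.IsHermitian → B.IsHermitian →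
      (trace ((A * B) ^ n)).re ≤ (trace (A ^ n * B ^ n)).re)
    {A B : Matrix ι ι ℂ} (hA : A.IsHermitian) (hB : B.IsHermitian) :
    (trace ((A * B) ^ (2 * n))).re ≤ (trace (A ^ (2 * n) * B ^ (2 * n))).re :=
  calc (trace ((A * B) ^ (2 * n))).re = (trace ((A * B) ^ n * (A * B) ^ n)).re := by
        rw [two_mul, pow_add]
    _ ≤ (trace ((A * B) ^ n * (A * B)ᴴ ^ n)).re := by
        simpa only [conjTranspose_pow] using re_trace_mul_self_le ((A * B) ^ n)
    _ ≤ (trace ((A * B * (A * B)ᴴ) ^ n)).re := hS _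
    _ = (trace ((A ^ 2 * B ^ 2) ^ n)).re := by
        rw [conjTranspose_mul, hA.eq, hB.eq, show A * B * (B * A) = A * (B ^ 2 * A) by noncomm_ring,
          trace_mul_pow_comm, show B ^ 2 * A * A = B ^ 2 * A ^ 2 by noncomm_ring,
          trace_mul_pow_comm]
    _ ≤ (trace ((A ^ 2) ^ n * (B ^ 2) ^ n)).re := hAB _ _ (hA.pow 2) (hB.pow 2)
    _ = (trace (A ^ (2 * n) * B ^ (2 * n))).re := by rw [pow_mul, pow_mul]

theorem re_trace_pow_two_mul_mul_conjTranspose_pow_le {n : ℕ}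
    (hS : ∀ S : Matrix ι ι ℂ, (trace (S ^ n * Sᴴ ^ n)).re ≤ (trace ((S * Sᴴ) ^ n)).re)
    (hAB : ∀ A B : Matrix ι ι ℂ, A.IsHermitian → B.IsHermitian →
      (trace ((A * B) ^ n)).re ≤ (trace (A ^ n * B ^ n)).re)
    (S : Matrix ι ι ℂ) :
    (trace (S ^ (2 * n) * Sᴴ ^ (2 * n))).re ≤ (trace ((S * Sᴴ) ^ (2 * n))).re := by
  have hSSH := isHermitian_mul_conjTranspose_self S
  have hSHS := isHermitian_conjTranspose_mul_self S
  have htrace : trace ((S * Sᴴ) ^ n * (S * Sᴴ) ^ n) = trace ((Sᴴ * S) ^ n * (Sᴴ * S) ^ n) := by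
    rw [← pow_add, ← pow_add, trace_mul_pow_comm]
  calc (trace (S ^ (2 * n) * Sᴴ ^ (2 * n))).re = (trace ((S ^ 2) ^ n * (S ^ 2)ᴴ ^ n)).re := by
        rw [conjTranspose_pow, pow_mul, pow_mul]
    _ ≤ (trace ((S ^ 2 * (S ^ 2)ᴴ) ^ n)).re := hS _
    _ = (trace ((S * Sᴴ * (Sᴴ * S)) ^ n)).re := by
        rw [conjTranspose_pow, show S ^ 2 * Sᴴ ^ 2 = S * (S * Sᴴ * Sᴴ) by noncomm_ring,
          trace_mul_pow_comm, show S * Sᴴ * Sᴴ * S = S * Sᴴ * (Sᴴ * S) by noncomm_ring]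
    _ ≤ (trace ((S * Sᴴ) ^ n * (Sᴴ * S) ^ n)).re := hAB _ _ hSSH hSHS
    _ ≤ (trace ((S * Sᴴ) ^ (2 * n))).re := by
        have h := two_mul_re_trace_mul_conjTranspose_le ((S * Sᴴ) ^ n) ((Sᴴ * S) ^ n)
        rw [(hSSH.pow n).eq, (hSHS.pow n).eq, htrace] at h
        rw [two_mul, pow_add, htrace]
        linarith

theorem re_trace_mul_pow_two_pow_le (k : ℕ) {A B : Matrix ι ι ℂ} (hA : A.IsHermitian)
    (hB : B.IsHermitian) :
    (trace ((A * B) ^ 2 ^ k)).re ≤ (trace (A ^ 2 ^ k * B ^ 2 ^ k)).re := by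
  suffices ∀ k : ℕ,
      (∀ S : Matrix ι ι ℂ, (trace (S ^ 2 ^ k * Sᴴ ^ 2 ^ k)).re ≤ (trace ((S * Sᴴ) ^ 2 ^ k)).re) ∧
      (∀ A B : Matrix ι ι ℂ, A.IsHermitian → B.IsHermitian →
        (trace ((A * B) ^ 2 ^ k)).re ≤ (trace (A ^ 2 ^ k * B ^ 2 ^ k)).re) from
    (this k).2 A B hA hB
  intro k
  induction k with
  | zero => simp
  | succ k ih =>
    rw [pow_succ' 2 k]
    exact ⟨re_trace_pow_two_mul_mul_conjTranspose_pow_le ih.1 ih.2,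
      fun A B => re_trace_mul_pow_two_mul_le ih.1 ih.2⟩

end Matrix

/-- Golden–Thompson inequality. -/
theorem golden_thompson {d : ℕ} (X Y : Matrix (Fin d) (Fin d) ℂ)
    (hX : X.IsHermitian) (hY : Y.IsHermitian) :
    ((NormedSpace.exp (X + Y)).trace).re
      ≤ ((NormedSpace.exp X * NormedSpace.exp Y).trace).re := by
  have hre_trace : Continuous fun M : Matrix (Fin d) (Fin d) ℂ => (trace M).re :=
    Complex.continuous_re.comp continuous_id.matrix_trace
  have hlim := (lie_product_formula X Y).comp (tendsto_pow_atTop_atTop_of_one_lt one_lt_two)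
  refine le_of_tendsto ((hre_trace.tendsto _).comp hlim) (Eventually.of_forall fun k => ?_)
  set t : ℝ := ((2 ^ k : ℕ) : ℝ)⁻¹
  have hroot (Z : Matrix (Fin d) (Fin d) ℂ) : exp (t • Z) ^ 2 ^ k = exp Z := by
    rw [← Matrix.exp_nsmul, ← Nat.cast_smul_eq_nsmul ℝ, smul_smul, mul_inv_cancel₀ (by positivity),
      one_smul]
  have ht : IsSelfAdjoint t := IsSelfAdjoint.all t
  simpa only [Function.comp_apply, hroot] using
    re_trace_mul_pow_two_pow_le k (hX.smul ht).exp (hY.smul ht).exp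
end

section
/- Entropy maximization Lagrangian: for Hermitian K on a d-dimensional space, inf over positive definite γ of tr[γ log γ] + tr[γ K] equals −tr[exp(−K − 1)], attained at γ = exp(−K − 1). -/
open Matrix
open scoped ComplexOrder

/-!
Gibbs variational principle. Diagonalize `γ = ∑ xᵢ |uᵢ⟩⟨uᵢ|` and `A = -K - 1 = ∑ tⱼ |vⱼ⟩⟨vⱼ|`.
The overlaps `|⟨uᵢ, vⱼ⟩|²` form a doubly stochastic matrix `P`, so
`tr[γ log γ] - tr[γ A] - tr γ + tr eᴬ = ∑ᵢⱼ Pᵢⱼ (xᵢ log xᵢ - xᵢ tⱼ - xᵢ + e^{tⱼ})`, and every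
bracket is nonnegative by the Fenchel–Young inequality `x t ≤ (x log x - x) + eᵗ`. Since
`γ K = -γ A - γ`, this says that the objective is at least `-tr eᴬ`, with equality at `γ = eᴬ`
because `log eᴬ = A`.
-/

theorem Real.mul_le_mul_log_sub_add_exp {x : ℝ} (hx : 0 ≤ x) (t : ℝ) :
    x * t ≤ x * Real.log x - x + Real.exp t := by
  rcases hx.eq_or_lt with rfl | hx
  · simpa using (Real.exp_pos t).le
  have h := mul_le_mul_of_nonneg_left (Real.add_one_le_exp (t - Real.log x)) hx.le
  rw [Real.exp_sub, Real.exp_log hx, mul_div_cancel₀ _ hx.ne'] at h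
  linarith

theorem Matrix.sum_mul_mul_le_of_mem_doublyStochastic {n : Type*} [Fintype n] [DecidableEq n]
    {P : Matrix n n ℝ} (hP : P ∈ doublyStochastic ℝ n) {x : n → ℝ} (hx : ∀ i, 0 ≤ x i)
    (t : n → ℝ) :
    ∑ i, ∑ j, x i * t j * P i j
      ≤ ∑ i, x i * Real.log (x i) - ∑ i, x i + ∑ j, Real.exp (t j) := by
  have hrow (c : n → ℝ) : ∑ i, c i = ∑ i, ∑ j, c i * P i j := by
    simp_rw [← Finset.mul_sum, sum_row_of_mem_doublyStochastic hP, mul_one]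
  have hcol (c : n → ℝ) : ∑ j, c j = ∑ i, ∑ j, c j * P i j := by
    rw [Finset.sum_comm]
    simp_rw [← Finset.mul_sum, sum_col_of_mem_doublyStochastic hP, mul_one]
  rw [hrow fun i => x i * Real.log (x i), hrow x, hcol fun j => Real.exp (t j),
    ← Finset.sum_sub_distrib, ← Finset.sum_add_distrib]
  gcongr with i _
  rw [← Finset.sum_sub_distrib, ← Finset.sum_add_distrib]
  gcongr with j _
  have := mul_le_mul_of_nonneg_right (Real.mul_le_mul_log_sub_add_exp (hx i) (t j))
    (nonneg_of_mem_doublyStochastic hP (i := i) (j := j))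
  linarith

namespace Matrix

variable {𝕜 n : Type*} [RCLike 𝕜] [Fintype n] [DecidableEq n]

theorem of_norm_sq_mem_doublyStochastic {U : Matrix n n 𝕜} (hU : U ∈ unitaryGroup n 𝕜) :
    of (fun i j => ‖U i j‖ ^ 2) ∈ doublyStochastic ℝ n := by
  have hrow := mem_unitaryGroup_iff.mp hU
  have hcol := mem_unitaryGroup_iff'.mp hU
  refine mem_doublyStochastic_iff_sum.mpr ⟨fun _ _ => sq_nonneg _, fun i => ?_, fun j => ?_⟩
  · have h := congr_fun₂ hrow i i
    simp only [mul_apply, star_apply, RCLike.star_def, RCLike.mul_conj, one_apply_eq] at h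
    exact_mod_cast h
  · have h := congr_fun₂ hcol j j
    simp only [mul_apply, star_apply, RCLike.star_def, RCLike.conj_mul, one_apply_eq] at h
    exact_mod_cast h

theorem trace_diagonal_mul_mul_diagonal_mul_star (a b : n → ℝ) (W : Matrix n n 𝕜) :
    (diagonal (RCLike.ofReal ∘ a) * W * diagonal (RCLike.ofReal ∘ b) * star W).trace
      = ((∑ i, ∑ j, a i * b j * ‖W i j‖ ^ 2 : ℝ) : 𝕜) := by
  have hX (i j : n) :
      (diagonal (RCLike.ofReal ∘ a) * W * diagonal (RCLike.ofReal ∘ b) : Matrix n n 𝕜) i j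
        = a i * W i j * b j := by
    simp only [mul_diagonal, diagonal_mul, Function.comp_apply]
  simp only [trace, diag_apply, mul_apply, hX]
  push_cast
  refine Finset.sum_congr rfl fun i _ => Finset.sum_congr rfl fun j _ => ?_
  rw [star_apply, RCLike.star_def, ← RCLike.mul_conj]
  ring

namespace IsHermitian

variable {A B : Matrix n n 𝕜}

noncomputable def eigenbasisOverlap (hA : A.IsHermitian) (hB : B.IsHermitian) : Matrix n n ℝ :=
  of fun i j => ‖(star (hA.eigenvectorUnitary : Matrix n n 𝕜) * hB.eigenvectorUnitary) i j‖ ^ 2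

theorem eigenbasisOverlap_mem_doublyStochastic (hA : A.IsHermitian) (hB : B.IsHermitian) :
    hA.eigenbasisOverlap hB ∈ doublyStochastic ℝ n :=
  of_norm_sq_mem_doublyStochastic (star hA.eigenvectorUnitary * hB.eigenvectorUnitary).2

theorem trace_mul_eq_sum_eigenbasisOverlap (hA : A.IsHermitian) (hB : B.IsHermitian) :
    (A * B).trace = ((∑ i, ∑ j, hA.eigenvalues i * hB.eigenvalues j *
      hA.eigenbasisOverlap hB i j : ℝ) : 𝕜) := by
  set U : Matrix n n 𝕜 := ↑hA.eigenvectorUnitary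
  set V : Matrix n n 𝕜 := ↑hB.eigenvectorUnitary
  conv_lhs => rw [hA.spectral_theorem, hB.spectral_theorem]
  trans (diagonal (RCLike.ofReal ∘ hA.eigenvalues) * (star U * V) *
    diagonal (RCLike.ofReal ∘ hB.eigenvalues) * star (star U * V)).trace
  · simp only [Unitary.conjStarAlgAut_apply, mul_assoc]
    rw [trace_mul_comm U]
    simp only [mul_assoc, star_mul, star_star]
    rfl
  · rw [trace_diagonal_mul_mul_diagonal_mul_star]
    rfl

theorem trace_cfc (hA : A.IsHermitian) (f : ℝ → ℝ) :
    (cfc f A).trace = ∑ i, (f (hA.eigenvalues i) : 𝕜) := by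
  rw [hA.cfc_eq, IsHermitian.cfc, Unitary.conjStarAlgAut_apply, trace_mul_cycle,
    Unitary.coe_star_mul_self, one_mul, trace_diagonal]
  rfl

end IsHermitian

theorem PosSemidef.re_trace_mul_le {γ A : Matrix n n 𝕜} (hγ : γ.PosSemidef)
    (hA : A.IsHermitian) :
    RCLike.re (γ * A).trace ≤ RCLike.re (γ * cfc Real.log γ).trace - RCLike.re γ.trace
      + RCLike.re (cfc Real.exp A).trace := by
  have hγlog : γ * cfc Real.log γ = cfc (fun x => x * Real.log x) γ := by
    rw [cfc_mul (fun x => x) Real.log γ (hg := γ.finite_real_spectrum.continuousOn _),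
      cfc_id' ℝ γ hγ.1.isSelfAdjoint]
  rw [hγ.1.trace_mul_eq_sum_eigenbasisOverlap hA, hγlog, hγ.1.trace_cfc, hA.trace_cfc,
    hγ.1.trace_eq_sum_eigenvalues]
  simp only [RCLike.ofReal_re, ← RCLike.ofReal_sum]
  exact sum_mul_mul_le_of_mem_doublyStochastic (hγ.1.eigenbasisOverlap_mem_doublyStochastic hA)
    hγ.eigenvalues_nonneg _

end Matrix

namespace Matrix.IsHermitian

variable {d : ℕ} {A : Matrix (Fin d) (Fin d) ℂ}

theorem mexp_eq_cfc (hA : A.IsHermitian) : mexp A = cfc Real.exp A := by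
  -- `NormedSpace.exp` only sees the topology, so any compatible normed algebra structure will do.
  let := Matrix.instL2OpNormedRing (n := Fin d) (𝕜 := ℂ)
  let := Matrix.instL2OpNormedAlgebra (n := Fin d) (𝕜 := ℂ)
  let : NormedAlgebra ℝ (Matrix (Fin d) (Fin d) ℂ) := NormedAlgebra.restrictScalars ℝ ℂ _
  exact CFC.real_exp_eq_normedSpace_exp hA |>.symm

theorem mlog_mexp (hA : A.IsHermitian) : mlog (mexp A) = A := by
  rw [mlog, hA.mexp_eq_cfc, ← cfc_comp' Real.log Real.exp A (by fun_prop (disch := aesop))]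
  simpa using cfc_id' ℝ A hA.isSelfAdjoint

open scoped MatrixOrder in
theorem posDef_mexp (hA : A.IsHermitian) : (mexp A).PosDef := by
  rw [hA.mexp_eq_cfc]
  exact ((cfc_isStrictlyPositive_iff Real.exp A).mpr fun x _ => Real.exp_pos x).posDef

end Matrix.IsHermitian

/-- Entropy maximization: `inf_{γ>0} tr[γ log γ] + tr[γ K] = −tr[exp(−K−1)]`,
attained at `γ = exp(−K−1)`. -/
theorem entropy_maximization_lagrangian {d : ℕ}
    (K : Matrix (Fin d) (Fin d) ℂ) (hK : K.IsHermitian) :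
    (⨅ γ : {γ : Matrix (Fin d) (Fin d) ℂ // γ.PosDef},
        ((γ.1 * mlog γ.1).trace.re + (γ.1 * K).trace.re))
      = -((mexp (-K - 1)).trace.re)
    ∧ ((mexp (-K - 1) * mlog (mexp (-K - 1))).trace.re
        + (mexp (-K - 1) * K).trace.re
        = -((mexp (-K - 1)).trace.re)) := by
  set A : Matrix (Fin d) (Fin d) ℂ := -K - 1
  have hA : A.IsHermitian := hK.neg.sub isHermitian_one
  have trace_mul_K_re (γ : Matrix (Fin d) (Fin d) ℂ) :
      (γ * K).trace.re = -(γ * A).trace.re - γ.trace.re := by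
    simp only [A, mul_sub, mul_neg, mul_one, trace_sub, trace_neg, Complex.sub_re,
      Complex.neg_re]
    ring
  have attained : (mexp A * mlog (mexp A)).trace.re + (mexp A * K).trace.re
      = -(mexp A).trace.re := by
    rw [trace_mul_K_re, hA.mlog_mexp]
    ring
  have lower (γ : {γ : Matrix (Fin d) (Fin d) ℂ // γ.PosDef}) :
      -(mexp A).trace.re ≤ (γ.1 * mlog γ.1).trace.re + (γ.1 * K).trace.re := by
    have := γ.2.posSemidef.re_trace_mul_le hA
    rw [← hA.mexp_eq_cfc] at this
    rw [trace_mul_K_re, mlog]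
    simp only [RCLike.re_to_complex] at this
    linarith
  have : Nonempty {γ : Matrix (Fin d) (Fin d) ℂ // γ.PosDef} := ⟨⟨mexp A, hA.posDef_mexp⟩⟩
  refine ⟨IsGLB.ciInf_eq (IsLeast.isGLB ⟨⟨⟨mexp A, hA.posDef_mexp⟩, attained⟩, ?_⟩), attained⟩
  rintro _ ⟨γ, rfl⟩
  exact lower γ
end
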